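/- arXiv:1710.08820 — 5 statements merged into one kernel-verified Lean document; each statement's English description precedes it below -/
import Mathlib

section
/- Let T : {0,1}* → {0,1}* be a non-erasing binary morphism. If T(01) < T(1) in the lexicographic order (with 0 < 1), then T is order-preserving on finite words: for all finite binary words u, v with u ≤ v lexicographically, T(u) ≤ T(v) lexicographically. -/
/-- Apply a binary morphism to a finite word. -/
def applyM (T : Bool → List Bool) (w : List Bool) : List Bool := (w.map T).flatten

/-- Strict lexicographic order on finite binary words (false < true). -/
def LexLt (u v : List Bool) : Prop := List.Lex (· < ·) u v

/-- Lexicographic order: u ≤ v iff u is a prefix of v or they differ with a smaller letter. -/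
def LexLe (u v : List Bool) : Prop := List.Lex (· < ·) u v ∨ u = v

/-- Image of an infinite word under a morphism (letterwise, concatenated). -/
def applyInf (T : Bool → List Bool) (u : ℕ → Bool) : ℕ → Bool :=
  fun n => (applyM T ((List.range (n + 1)).map u)).getD n false

/-- Strict lexicographic order on infinite binary words (false < true). -/
def InfLt (u v : ℕ → Bool) : Prop := ∃ n, (∀ i < n, u i = v i) ∧ u n < v n

/-- n-fold concatenation power of a word. -/
def wpow {α : Type*} (x : List α) (n : ℕ) : List α := (List.replicate n x).flatten

/-- A word is primitive if it is not a power uⁿ with n ≥ 2. -/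
def PrimitiveW {α : Type*} (x : List α) : Prop := ∀ (u : List α) (n : ℕ), 2 ≤ n → x ≠ wpow u n

/-- A binary morphism is periodic if T(0), T(1) are powers of a common word. -/
def PeriodicM (T : Bool → List Bool) : Prop :=
  ∃ (t : List Bool) (i j : ℕ), T false = wpow t i ∧ T true = wpow t j

/-- The i-th shift of an infinite word. -/
def shiftW {α : Type*} (ω : ℕ → α) (i : ℕ) : ℕ → α := fun n => ω (i + n)

/-- The word w occurs in ω at position i. -/
def OccursAt {α : Type*} (ω : ℕ → α) (w : List α) (i : ℕ) : Prop :=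
  ∀ k < w.length, w[k]? = some (ω (i + k))

/-- w is a factor of ω. -/
def IsFactor {α : Type*} (ω : ℕ → α) (w : List α) : Prop := ∃ i, OccursAt ω w i

/-- Occurrences at i and i' of length-n factors induce the same permutation:
the relative lexicographic order of the shifts starting inside the occurrences agree. -/
def SamePermAt (ω : ℕ → Bool) (n i i' : ℕ) : Prop :=
  ∀ k < n, ∀ l < n,
    (InfLt (shiftW ω (i + k)) (shiftW ω (i + l)) ↔ InfLt (shiftW ω (i' + k)) (shiftW ω (i' + l)))

/-- Two factors of ω have the same permutation: some occurrences induce equal patterns. -/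
def SamePerm (ω : ℕ → Bool) (u v : List Bool) : Prop :=
  ∃ i i', OccursAt ω u i ∧ OccursAt ω v i' ∧ u.length = v.length ∧
    SamePermAt ω u.length i i'

/-- w is a right special factor of ω. -/
def RightSpecial (ω : ℕ → Bool) (w : List Bool) : Prop :=
  IsFactor ω (w ++ [false]) ∧ IsFactor ω (w ++ [true])

/-- w is a left special factor of ω. -/
def LeftSpecial (ω : ℕ → Bool) (w : List Bool) : Prop :=
  IsFactor ω (false :: w) ∧ IsFactor ω (true :: w)

/-- An infinite word is aperiodic: no two distinct shifts are equal. -/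
def AperiodicW {α : Type*} (ω : ℕ → α) : Prop := ∀ i j : ℕ, i ≠ j → shiftW ω i ≠ shiftW ω j

/-- A finite word has period q. -/
def HasPeriod {α : Type*} (w : List α) (q : ℕ) : Prop :=
  ∀ i, i + q < w.length → w[i]? = w[i + q]?

/-- Uniform recurrence: every long enough factor contains every short factor. -/
def UniformlyRecurrent {α : Type*} (s : ℕ → α) : Prop :=
  ∀ ℓ : ℕ, ∃ L : ℕ, ∀ w z : List α, IsFactor s w → w.length = L →
    IsFactor s z → z.length = ℓ → z <:+: w

/-- Not eventually periodic. -/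
def NotEventuallyPeriodic {α : Type*} (s : ℕ → α) : Prop :=
  ¬ ∃ p : ℕ, 1 ≤ p ∧ ∃ N : ℕ, ∀ n ≥ N, s (n + p) = s n

/-- Concatenation of a finite word with an infinite word. -/
def catInf (w : List Bool) (u : ℕ → Bool) : ℕ → Bool :=
  fun n => if h : n < w.length then w.get ⟨n, h⟩ else u (n - w.length)

/- Write `a = T(0)`. Since `a·T(1) < T(1)` and `a` is nonempty, `a·T(1)` is not a prefix of `T(1)`, so
the two words branch apart; peeling copies of `a` off `T(1)` gives `T(1) = a^M x`, where `a` branches off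
below `x`. Every image `T(y)` is a power of `a` or starts with `a^M`, so `T(0y) = a·T(y)` is either a
power `a^k` with `k ≤ M`, a prefix of `T(1z) = a^M x ⋯`, or starts with `a^M a`, which lies below
`a^M x`. Hence `T(0y) ≤ T(1z)` for all `y, z`, which is all that monotonicity needs:
images of words compare like the images of their suffixes from the first differing letter on. -/

section Powers

variable {α : Type*}

theorem wpow_succ (a : List α) (n : ℕ) : wpow a (n + 1) = a ++ wpow a n := by
  simp [wpow, List.replicate_succ]

theorem wpow_add (a : List α) (m n : ℕ) : wpow a (m + n) = wpow a m ++ wpow a n := by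
  rw [wpow, wpow, wpow, List.replicate_add, List.flatten_append]

theorem append_wpow_comm (a : List α) (n : ℕ) : a ++ wpow a n = wpow a n ++ a := by
  rw [← wpow_succ, wpow_add]
  simp [wpow]

theorem wpow_prefix_wpow (a : List α) {m n : ℕ} (h : m ≤ n) : wpow a m <+: wpow a n := by
  obtain ⟨k, rfl⟩ := Nat.exists_eq_add_of_le h
  rw [wpow_add]
  exact List.prefix_append _ _

end Powers

section Branching

variable {α : Type*} [LT α]

def BranchesBelow (u v : List α) : Prop :=
  ∃ p c d s t, c < d ∧ u = p ++ c :: s ∧ v = p ++ d :: t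

theorem BranchesBelow.append_lt {u v : List α} (h : BranchesBelow u v) (s t : List α) :
    u ++ s < v ++ t := by
  obtain ⟨p, c, d, s', t', hcd, rfl, rfl⟩ := h
  simpa only [List.append_assoc, List.cons_append] using List.append_left_lt (List.Lex.rel hcd)

theorem branchesBelow_of_lt_of_not_prefix {u v : List α} (h : u < v) (hp : ¬ u <+: v) :
    BranchesBelow u v := by
  induction h with
  | nil => exact absurd List.nil_prefix hp
  | @cons a u v _ ih =>
    obtain ⟨p, c, d, s, t, hcd, rfl, rfl⟩ :=
      ih fun ⟨w, hw⟩ => hp ⟨w, by rw [List.cons_append, hw]⟩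
    exact ⟨a :: p, c, d, s, t, hcd, rfl, rfl⟩
  | @rel c u d v hcd => exact ⟨[], c, d, u, v, hcd, rfl, rfl⟩

theorem exists_eq_wpow_append_branchesBelow {a b : List α} (ha : a ≠ [])
    (h : BranchesBelow (a ++ b) b) : ∃ M x, b = wpow a M ++ x ∧ BranchesBelow a x := by
  induction hn : b.length using Nat.strong_induction_on generalizing b with
  | _ n ih =>
  obtain ⟨p, c, d, s, t, hcd, hab, hb⟩ := h
  by_cases hap : a <+: p
  · obtain ⟨p', rfl⟩ := hap
    have hbb' : b = a ++ (p' ++ d :: t) := by rw [hb, List.append_assoc]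
    have hlen : (p' ++ d :: t).length < n := by
      have := List.length_pos_iff.mpr ha
      simp only [← hn, hbb', List.length_append]
      omega
    have hb' : BranchesBelow (a ++ (p' ++ d :: t)) (p' ++ d :: t) := by
      refine ⟨p', c, d, s, t, hcd, ?_, rfl⟩
      rw [← hbb', ← List.append_cancel_left_eq a, ← List.append_assoc, hab]
    obtain ⟨M, x, hx', hx⟩ := ih _ hlen hb' rfl
    exact ⟨M + 1, x, by rw [hbb', hx', wpow_succ, List.append_assoc], hx⟩
  · refine ⟨0, b, rfl, ?_⟩
    rcases List.append_eq_append_iff.mp hab with ⟨p', rfl, -⟩ | ⟨_ | ⟨e, r⟩, rfl, hcs⟩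
    · exact absurd (List.prefix_append a p') hap
    · exact absurd (by simp) hap
    · obtain ⟨rfl, -⟩ := List.cons_eq_cons.mp hcs
      exact ⟨p, c, d, r, t, hcd, rfl, hb⟩

end Branching

theorem lexLe_iff_le {u v : List Bool} : LexLe u v ↔ u ≤ v := by
  rw [LexLe, le_iff_lt_or_eq]
  rfl

section Morphism

@[simp]
theorem applyM_nil (T : Bool → List Bool) : applyM T [] = [] := rfl

@[simp]
theorem applyM_cons (T : Bool → List Bool) (c : Bool) (w : List Bool) :
    applyM T (c :: w) = T c ++ applyM T w := rfl

variable {T : Bool → List Bool}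

theorem applyM_monotone (h01 : ∀ y z, applyM T (false :: y) ≤ applyM T (true :: z)) :
    Monotone (applyM T) := by
  refine monotone_iff_forall_lt.mpr fun u v huv => ?_
  induction huv with
  | nil =>
    rw [applyM_nil]
    exact not_lt.mp (List.not_lt_nil _)
  | @cons c u v _ ih =>
    rw [applyM_cons, applyM_cons]
    obtain ih | ih := ih.lt_or_eq
    · exact (List.append_left_lt ih).le
    · rw [ih]
  | @rel c u d v hcd =>
    obtain ⟨rfl, rfl⟩ := Bool.lt_iff.mp hcd
    exact h01 u v

theorem applyM_eq_wpow_or_wpow_prefix {M : ℕ} {x : List Bool}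
    (hT : T true = wpow (T false) M ++ x) (y : List Bool) :
    (∃ k, applyM T y = wpow (T false) k) ∨ wpow (T false) M <+: applyM T y := by
  induction y with
  | nil => exact Or.inl ⟨0, rfl⟩
  | cons c y ih =>
    cases c with
    | false =>
      rcases ih with ⟨k, hk⟩ | ⟨r, hr⟩
      · exact Or.inl ⟨k + 1, by rw [applyM_cons, hk, wpow_succ]⟩
      · exact Or.inr ⟨T false ++ r, by
          rw [applyM_cons, ← hr, ← List.append_assoc, ← append_wpow_comm, List.append_assoc]⟩
    | true =>
      rw [applyM_cons, hT, List.append_assoc]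
      exact Or.inr (List.prefix_append _ _)

theorem applyM_false_cons_le_true_cons {M : ℕ} {x : List Bool}
    (hT : T true = wpow (T false) M ++ x) (hx : BranchesBelow (T false) x) (y z : List Bool) :
    applyM T (false :: y) ≤ applyM T (true :: z) := by
  have branch : ∀ r, wpow (T false) M ++ (T false ++ r) < applyM T (true :: z) := fun r => by
    rw [applyM_cons, hT, List.append_assoc]
    exact List.append_left_lt (hx.append_lt r _)
  rw [applyM_cons]
  rcases applyM_eq_wpow_or_wpow_prefix hT y with ⟨k, hk⟩ | ⟨r, hr⟩
  · rw [hk, ← wpow_succ]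
    rcases le_or_gt (k + 1) M with hkM | hMk
    · refine not_lt.mp ((wpow_prefix_wpow _ hkM).trans ?_).le
      rw [applyM_cons, hT, List.append_assoc]
      exact List.prefix_append _ _
    · obtain ⟨j, hj⟩ := Nat.exists_eq_add_of_lt hMk
      rw [hj, Nat.add_assoc, wpow_add, wpow_succ]
      exact (branch _).le
  · rw [← hr, ← List.append_assoc, append_wpow_comm, List.append_assoc]
    exact (branch r).le

end Morphism

/-- If T is non-erasing and T(01) < T(1), then T is order-preserving
on finite words. -/
theorem stmt0 (T : Bool → List Bool) (hne : ∀ b, T b ≠ [])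
    (h : LexLt (applyM T [false, true]) (T true)) :
    ∀ u v : List Bool, LexLe u v → LexLe (applyM T u) (applyM T v) := by
  have hlt : T false ++ T true < T true := by simpa [applyM, LexLt] using h
  have hnp : ¬ T false ++ T true <+: T true := fun hp => by
    have hlen := hp.length_le
    have hpos := List.length_pos_iff.mpr (hne false)
    rw [List.length_append] at hlen
    omega
  obtain ⟨M, x, hT, hx⟩ := exists_eq_wpow_append_branchesBelow (hne false)
    (branchesBelow_of_lt_of_not_prefix hlt hnp)
  intro u v huv
  rw [lexLe_iff_le] at huv ⊢
  exact applyM_monotone (applyM_false_cons_le_true_cons hT hx) huv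
end

section
/- Let T : {0,1}* → {0,1}* be an aperiodic morphism (T(0) and T(1) are not powers of a common word) such that T(1) is a prefix of T(01). Then T, extended to infinite binary words, is either order-preserving on infinite words or order-reversing on infinite words. -/
theorem wpow_add_s5 {α : Type*} (t : List α) (i j : ℕ) : wpow t (i + j) = wpow t i ++ wpow t j := by
  rw [wpow, wpow, wpow, List.replicate_add, List.flatten_append]

theorem exists_wpow_of_append_comm {α : Type*} (a b : List α) (h : a ++ b = b ++ a) :
    ∃ t i j, a = wpow t i ∧ b = wpow t j := by
  induction hn : a.length + b.length using Nat.strong_induction_on generalizing a b with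
  | _ n ih =>
  wlog hle : a.length ≤ b.length generalizing a b
  · obtain ⟨t, i, j, hb, ha⟩ := this b a h.symm (by omega) (by omega)
    exact ⟨t, j, i, ha, hb⟩
  rcases eq_or_ne a [] with rfl | ha
  · exact ⟨b, 0, 1, by simp [wpow], by simp [wpow]⟩
  obtain ⟨c, rfl⟩ : a <+: b := List.prefix_of_prefix_length_le ⟨b, h⟩ (List.prefix_append b a) hle
  have hc : a ++ c = c ++ a := by simpa using h
  have hlen : a.length + c.length < n := by
    have := List.length_pos_iff.2 ha
    simp only [List.length_append] at hn
    omega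
  obtain ⟨t, i, j, rfl, rfl⟩ := ih _ hlen a c hc rfl
  exact ⟨t, i, i + j, rfl, (wpow_add_s5 t i j).symm⟩

theorem ne_nil_of_not_periodicM {T : Bool → List Bool} (hap : ¬ PeriodicM T) (b : Bool) :
    T b ≠ [] := by
  intro hb
  cases b
  · exact hap ⟨T true, 0, 1, by simp [hb, wpow], by simp [wpow]⟩
  · exact hap ⟨T false, 1, 0, by simp [wpow], by simp [hb, wpow]⟩

theorem catInf_apply_of_lt {w : List Bool} {z : ℕ → Bool} {n : ℕ} (h : n < w.length) :
    catInf w z n = w[n] := by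
  simp [catInf, h]

theorem catInf_apply_of_le {w : List Bool} {z : ℕ → Bool} {n : ℕ} (h : w.length ≤ n) :
    catInf w z n = z (n - w.length) := by
  simp [catInf, Nat.not_lt.2 h]

theorem catInf_append (w w' : List Bool) (z : ℕ → Bool) :
    catInf (w ++ w') z = catInf w (catInf w' z) := by
  funext n
  rcases lt_or_ge n w.length with h | h
  · rw [catInf_apply_of_lt (by simp; omega), catInf_apply_of_lt h, List.getElem_append_left h]
  · rw [catInf_apply_of_le h]
    rcases lt_or_ge n (w ++ w').length with h' | h'
    · simp only [List.length_append] at h'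
      rw [catInf_apply_of_lt (by simp; omega), catInf_apply_of_lt (by omega),
        List.getElem_append_right h]
    · simp only [List.length_append] at h'
      rw [catInf_apply_of_le (by simpa using h'), catInf_apply_of_le (by omega)]
      simp [Nat.sub_sub]

theorem eq_of_catInf_eq {w w' : List Bool} {z z' : ℕ → Bool} (h : catInf w z = catInf w' z')
    (hl : w.length = w'.length) : w = w' := by
  refine List.ext_getElem hl fun n hn hn' => ?_
  rw [← catInf_apply_of_lt (z := z), ← catInf_apply_of_lt (z := z') hn', h]

theorem append_comm_of_catInf_eq_self {a b : List Bool} {x : ℕ → Bool}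
    (ha : catInf a x = x) (hb : catInf b x = x) : a ++ b = b ++ a :=
  eq_of_catInf_eq (z := x) (z' := x) (by rw [catInf_append, catInf_append, ha, hb, ha])
    (by simp [Nat.add_comm])

theorem InfLt.catInf (w : List Bool) {u v : ℕ → Bool} (h : InfLt u v) :
    InfLt (catInf w u) (catInf w v) := by
  obtain ⟨n, hagree, hlt⟩ := h
  refine ⟨w.length + n, fun i hi => ?_, ?_⟩
  · rcases lt_or_ge i w.length with h | h
    · rw [catInf_apply_of_lt h, catInf_apply_of_lt h]
    · rw [catInf_apply_of_le h, catInf_apply_of_le h, hagree _ (by omega)]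
  · simpa [catInf_apply_of_le] using hlt

section applyInf

variable {T : Bool → List Bool}

theorem applyM_append (w w' : List Bool) :
    applyM T (w ++ w') = applyM T w ++ applyM T w' := by
  simp [applyM]

theorem length_le_length_applyM (hT : ∀ b, T b ≠ []) (w : List Bool) :
    w.length ≤ (applyM T w).length := by
  induction w with
  | nil => simp
  | cons b w ih =>
    have := List.length_pos_iff.2 (hT b)
    simp only [applyM, List.map_cons, List.flatten_cons, List.length_append, List.length_cons] at ih ⊢
    omega

theorem applyInf_apply (hT : ∀ b, T b ≠ []) (u : ℕ → Bool) {j N : ℕ} (hj : j < N) :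
    applyInf T u j = (applyM T ((List.range N).map u)).getD j false := by
  obtain ⟨k, rfl⟩ := Nat.exists_eq_add_of_lt hj
  have hlen : j < (applyM T ((List.range (j + 1)).map u)).length := by
    simpa using length_le_length_applyM hT ((List.range (j + 1)).map u)
  rw [show j + k + 1 = (j + 1) + k by omega, List.range_add, List.map_append, applyM_append,
    List.getD_append _ _ _ _ hlen]
  rfl

theorem applyInf_eq_catInf (hT : ∀ b, T b ≠ []) (u : ℕ → Bool) :
    applyInf T u = catInf (T (u 0)) (applyInf T (shiftW u 1)) := by
  funext n
  have hcons : applyM T ((List.range (n + 1)).map u)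
      = T (u 0) ++ applyM T ((List.range n).map (shiftW u 1)) := by
    simp [List.range_succ_eq_map, applyM, shiftW, Function.comp_def, Nat.add_comm]
  change (applyM T ((List.range (n + 1)).map u)).getD n false = _
  rw [hcons]
  rcases lt_or_ge n (T (u 0)).length with h | h
  · rw [catInf_apply_of_lt h, List.getD_append _ _ _ _ h, List.getD_eq_getElem]
  · have := List.length_pos_iff.2 (hT (u 0))
    rw [catInf_apply_of_le h, List.getD_append_right _ _ _ _ h,
      applyInf_apply hT _ (by omega : n - (T (u 0)).length < n)]

theorem applyInf_rel_of_infLt (hT : ∀ b, T b ≠ []) {R : (ℕ → Bool) → (ℕ → Bool) → Prop}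
    (hR : ∀ w p q, R p q → R (catInf w p) (catInf w q))
    (hhead : ∀ u v, u 0 = false → v 0 = true → R (applyInf T u) (applyInf T v))
    {u v : ℕ → Bool} (huv : InfLt u v) : R (applyInf T u) (applyInf T v) := by
  obtain ⟨n, hagree, hlt⟩ := huv
  induction n generalizing u v with
  | zero => exact hhead u v (Bool.lt_iff.1 hlt).1 (Bool.lt_iff.1 hlt).2
  | succ n ih =>
    rw [applyInf_eq_catInf hT u, applyInf_eq_catInf hT v, hagree 0 n.succ_pos]
    refine hR _ _ _ (ih (fun i hi => ?_) ?_)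
    · simpa [shiftW, Nat.add_comm] using hagree (i + 1) (by omega)
    · simpa [shiftW, Nat.add_comm] using hlt

end applyInf

section fixedPoint

variable {T : Bool → List Bool} {x : ℕ → Bool} {m : ℕ}

theorem catInf_apply_eq_of_lt (hx : catInf (T false) x = x)
    (hm : ∀ i < m, catInf (T true) x i = x i) (b : Bool) {i : ℕ} (hi : i < m) :
    catInf (T b) x i = x i := by
  cases b
  · rw [hx]
  · exact hm i hi

theorem applyInf_apply_eq_catInf (hT : ∀ b, T b ≠ []) (hx : catInf (T false) x = x)
    (hm : ∀ i < m, catInf (T true) x i = x i) (u : ℕ → Bool) {j : ℕ} (hj : j ≤ m) :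
    applyInf T u j = catInf (T (u 0)) x j := by
  induction j using Nat.strong_induction_on generalizing u with
  | _ j ih =>
  rw [applyInf_eq_catInf hT u]
  rcases lt_or_ge j (T (u 0)).length with h | h
  · rw [catInf_apply_of_lt h, catInf_apply_of_lt h]
  · have := List.length_pos_iff.2 (hT (u 0))
    rw [catInf_apply_of_le h, catInf_apply_of_le h, ih _ (by omega) _ (by omega),
      catInf_apply_eq_of_lt hx hm _ (by omega)]

theorem applyInf_apply_eq_of_lt (hT : ∀ b, T b ≠ []) (hx : catInf (T false) x = x)
    (hm : ∀ i < m, catInf (T true) x i = x i) (u : ℕ → Bool) {i : ℕ} (hi : i < m) :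
    applyInf T u i = x i :=
  (applyInf_apply_eq_catInf hT hx hm u hi.le).trans (catInf_apply_eq_of_lt hx hm _ hi)

theorem infLt_applyInf_of_lt (hT : ∀ b, T b ≠ []) (hx : catInf (T false) x = x)
    (hm : ∀ i < m, catInf (T true) x i = x i) (hlt : x m < catInf (T true) x m)
    {u v : ℕ → Bool} (hu : u 0 = false) (hv : v 0 = true) :
    InfLt (applyInf T u) (applyInf T v) := by
  refine ⟨m, fun i hi => ?_, ?_⟩
  · rw [applyInf_apply_eq_of_lt hT hx hm u hi, applyInf_apply_eq_of_lt hT hx hm v hi]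
  · rwa [applyInf_apply_eq_catInf hT hx hm u le_rfl, applyInf_apply_eq_catInf hT hx hm v le_rfl,
      hu, hv, hx]

theorem infLt_applyInf_of_gt (hT : ∀ b, T b ≠ []) (hx : catInf (T false) x = x)
    (hm : ∀ i < m, catInf (T true) x i = x i) (hgt : catInf (T true) x m < x m)
    {u v : ℕ → Bool} (hu : u 0 = false) (hv : v 0 = true) :
    InfLt (applyInf T v) (applyInf T u) := by
  refine ⟨m, fun i hi => ?_, ?_⟩
  · rw [applyInf_apply_eq_of_lt hT hx hm u hi, applyInf_apply_eq_of_lt hT hx hm v hi]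
  · rwa [applyInf_apply_eq_catInf hT hx hm u le_rfl, applyInf_apply_eq_catInf hT hx hm v le_rfl,
      hu, hv, hx]

end fixedPoint

theorem stmt5_general (T : Bool → List Bool) (hap : ¬ PeriodicM T) :
    (∀ u v : ℕ → Bool, InfLt u v → InfLt (applyInf T u) (applyInf T v)) ∨
    (∀ u v : ℕ → Bool, InfLt u v → InfLt (applyInf T v) (applyInf T u)) := by
  have hT := ne_nil_of_not_periodicM hap
  set x := applyInf T fun _ => false
  have hx : catInf (T false) x = x := (applyInf_eq_catInf hT fun _ => false).symm
  have hne : ∃ m, catInf (T true) x m ≠ x m := Function.ne_iff.1 fun h =>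
    hap (exists_wpow_of_append_comm _ _ (append_comm_of_catInf_eq_self hx h))
  have hm : ∀ i < Nat.find hne, catInf (T true) x i = x i := fun i hi =>
    not_not.1 (Nat.find_min hne hi)
  rcases lt_or_gt_of_ne (Nat.find_spec hne) with hgt | hlt
  · exact Or.inr fun u v => applyInf_rel_of_infLt hT (R := fun p q => InfLt q p)
      (fun w _ _ => InfLt.catInf w) fun _ _ => infLt_applyInf_of_gt hT hx hm hgt
  · exact Or.inl fun u v => applyInf_rel_of_infLt hT (fun w _ _ => InfLt.catInf w)
      fun _ _ => infLt_applyInf_of_lt hT hx hm hlt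

/-- An aperiodic binary morphism T with T(1) a prefix of T(01) is
order-preserving or order-reversing on infinite words. -/
theorem stmt5 (T : Bool → List Bool) (hap : ¬ PeriodicM T)
    (hpre : T true <+: applyM T [false, true]) :
    (∀ u v : ℕ → Bool, InfLt u v → InfLt (applyInf T u) (applyInf T v)) ∨
    (∀ u v : ℕ → Bool, InfLt u v → InfLt (applyInf T v) (applyInf T u)) :=
  stmt5_general T hap
end

section
/- Let s be an aperiodic, uniformly recurrent infinite word over a finite alphabet. Then for any integer p ≥ 1 there is a constant K(p) such that every factor of s with period at most p has length at most K(p). -/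
/-!
If factors of period `q` were unbounded, uniform recurrence would place every prefix of `s`
inside one of them, so every prefix, hence `s` itself, would have period `q`.
Taking the maximum of the bounds over `q ≤ p` gives `K(p)`.
-/

section Words

variable {α : Type*}

theorem HasPeriod.infix {z w : List α} {q : ℕ} (h : HasPeriod w q) (hz : z <:+: w) :
    HasPeriod z q := by
  obtain ⟨a, b, rfl⟩ := hz
  intro i hi
  have hget : ∀ j < z.length, (a ++ z ++ b)[a.length + j]? = z[j]? := fun j hj => by
    rw [List.append_assoc, List.getElem?_append_right (Nat.le_add_right _ _),
      Nat.add_sub_cancel_left, List.getElem?_append_left hj]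
  have := h (a.length + i) (by simp only [List.length_append]; omega)
  rwa [hget i (by omega), Nat.add_assoc, hget (i + q) hi] at this

theorem OccursAt.take {s : ℕ → α} {w : List α} {i : ℕ} (h : OccursAt s w i) (n : ℕ) :
    OccursAt s (w.take n) i := fun k hk => by
  rw [List.length_take] at hk
  rw [List.getElem?_take_of_lt (by omega)]
  exact h k (by omega)

theorem isFactor_map_range (s : ℕ → α) (n : ℕ) : IsFactor s ((List.range n).map s) :=
  ⟨0, fun k hk => by simp_all⟩

theorem UniformlyRecurrent.exists_infix_of_le_length {s : ℕ → α} (hur : UniformlyRecurrent s)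
    (ℓ : ℕ) : ∃ L, ∀ w z : List α, IsFactor s w → L ≤ w.length →
      IsFactor s z → z.length = ℓ → z <:+: w := by
  obtain ⟨L, hL⟩ := hur ℓ
  refine ⟨L, fun w z ⟨i, hw⟩ hwL hz hzℓ => ?_⟩
  exact (hL (w.take L) z ⟨i, hw.take L⟩ (by simpa using hwL) hz hzℓ).trans
    (List.take_prefix L w).isInfix

theorem UniformlyRecurrent.periodic_of_unbounded_hasPeriod {s : ℕ → α}
    (hur : UniformlyRecurrent s) {q : ℕ}
    (hunb : ∀ K, ∃ w : List α, IsFactor s w ∧ HasPeriod w q ∧ K < w.length) (n : ℕ) :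
    s (n + q) = s n := by
  obtain ⟨L, hL⟩ := hur.exists_infix_of_le_length (n + q + 1)
  obtain ⟨w, hw, hwq, hwL⟩ := hunb L
  set z := (List.range (n + q + 1)).map s
  have hzq : HasPeriod z q :=
    hwq.infix (hL w z hw hwL.le (isFactor_map_range s _) (by simp [z]))
  simpa [z] using (hzq n (by simp [z])).symm

theorem NotEventuallyPeriodic.exists_bound_of_hasPeriod {s : ℕ → α}
    (hap : NotEventuallyPeriodic s) (hur : UniformlyRecurrent s) {q : ℕ} (hq : 1 ≤ q) :
    ∃ K, ∀ w : List α, IsFactor s w → HasPeriod w q → w.length ≤ K := by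
  by_contra! hunb
  exact hap ⟨q, hq, 0, fun n _ => hur.periodic_of_unbounded_hasPeriod
    (fun K => (hunb K).imp fun _ h => ⟨h.1, h.2.1, h.2.2⟩) n⟩

end Words

theorem stmt8_general {α : Type*} (s : ℕ → α)
    (hap : NotEventuallyPeriodic s) (hur : UniformlyRecurrent s) :
    ∀ p : ℕ, 1 ≤ p → ∃ K : ℕ, ∀ w : List α, IsFactor s w →
      (∃ q : ℕ, 1 ≤ q ∧ q ≤ p ∧ HasPeriod w q) → w.length ≤ K := by
  intro p _
  have hbound : ∀ q, ∃ K, 1 ≤ q → ∀ w : List α, IsFactor s w → HasPeriod w q → w.length ≤ K :=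
    fun q => if hq : 1 ≤ q then (hap.exists_bound_of_hasPeriod hur hq).imp fun _ h _ => h
      else ⟨0, fun h => absurd h hq⟩
  choose K hK using hbound
  refine ⟨(Finset.Icc 1 p).sup K, fun w hw ⟨q, hq1, hqp, hwq⟩ => ?_⟩
  exact (hK q hq1 w hw hwq).trans (Finset.le_sup (Finset.mem_Icc.mpr ⟨hq1, hqp⟩))

/-- An aperiodic, uniformly recurrent word has bounded factors of
period at most p, for every p ≥ 1. -/
theorem stmt8 {α : Type*} [Fintype α] (s : ℕ → α)
    (hap : NotEventuallyPeriodic s) (hur : UniformlyRecurrent s) :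
    ∀ p : ℕ, 1 ≤ p → ∃ K : ℕ, ∀ w : List α, IsFactor s w →
      (∃ q : ℕ, 1 ≤ q ∧ q ≤ p ∧ HasPeriod w q) → w.length ≤ K :=
  stmt8_general s hap hur
end

section
/- Let ω be an infinite aperiodic binary word (no two shifts of ω are equal), and let u, v be distinct factors of ω of the same length n ≥ 2 that have the same permutation (i.e., Perm_ω(u) ∩ Perm_ω(v) ≠ ∅). Then u and v differ only in their last position. -/
/-!
In an aperiodic binary word the shift at position `m` is lexicographically smaller than the
shift at `m + 1` exactly when `ω m = 0`: the two shifts agree along the run of `ω m` starting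
at `m` and first differ where that run ends. Hence the permutation of an occurrence of a
factor of length `n` determines its first `n - 1` letters.
-/

lemma infLt_iff_of_first_diff {a b : ℕ → Bool} {r : ℕ} (heq : ∀ i < r, a i = b i)
    (hne : a r ≠ b r) : InfLt a b ↔ a r < b r := by
  refine ⟨fun ⟨s, hs, hlt⟩ => ?_, fun h => ⟨r, heq, h⟩⟩
  rcases lt_trichotomy s r with hsr | rfl | hrs
  · exact absurd (heq s hsr) hlt.ne
  · exact hlt
  · exact absurd (hs r hrs) hne

lemma eq_of_forall_lt_eq_succ {α : Type*} {ω : ℕ → α} {m r : ℕ}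
    (h : ∀ i < r, ω (m + i) = ω (m + 1 + i)) : ∀ i ≤ r, ω (m + i) = ω m := by
  intro i hi
  induction i with
  | zero => rfl
  | succ j ih => rw [show m + (j + 1) = m + 1 + j by omega, ← h j (by omega), ih (by omega)]

lemma infLt_shiftW_succ_iff {ω : ℕ → Bool} (hap : AperiodicW ω) (m : ℕ) :
    InfLt (shiftW ω m) (shiftW ω (m + 1)) ↔ ω m = false := by
  have hex : ∃ r, ω (m + r) ≠ ω (m + 1 + r) := by
    by_contra! h
    exact hap m (m + 1) (by omega) (funext h)
  classical
  have hne : ω (m + Nat.find hex) ≠ ω (m + 1 + Nat.find hex) := Nat.find_spec hex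
  have hmin : ∀ i < Nat.find hex, ω (m + i) = ω (m + 1 + i) :=
    fun i hi => not_not.mp (Nat.find_min hex hi)
  have hrun := eq_of_forall_lt_eq_succ hmin _ le_rfl
  rw [infLt_iff_of_first_diff (a := shiftW ω m) (b := shiftW ω (m + 1)) hmin hne]
  simp only [shiftW]
  rw [hrun] at hne ⊢
  revert hne
  cases ω m <;> cases ω (m + 1 + Nat.find hex) <;> decide

lemma OccursAt.getElem_eq {α : Type*} {ω : ℕ → α} {w : List α} {i : ℕ} (h : OccursAt ω w i)
    (k : ℕ) (hk : k < w.length) : w[k] = ω (i + k) :=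
  Option.some.inj ((List.getElem?_eq_getElem hk).symm.trans (h k hk))

theorem stmt10_general (ω : ℕ → Bool) (hap : AperiodicW ω) (u v : List Bool)
    (hperm : SamePerm ω u v) :
    u.dropLast = v.dropLast := by
  obtain ⟨i, i', hou, hov, hlen, hsp⟩ := hperm
  refine List.ext_getElem (by simp [hlen]) fun k hku hkv => ?_
  simp only [List.length_dropLast] at hku hkv
  rw [List.getElem_dropLast, List.getElem_dropLast, hou.getElem_eq, hov.getElem_eq]
  have horder := hsp k (by omega) (k + 1) (by omega)
  simp only [← add_assoc, infLt_shiftW_succ_iff hap] at horder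
  revert horder
  cases ω (i + k) <;> cases ω (i' + k) <;> simp

/-- Distinct factors of the same length n ≥ 2 of an aperiodic word
having the same permutation differ only in their last position. -/
theorem stmt10 (ω : ℕ → Bool) (hap : AperiodicW ω) (u v : List Bool) (n : ℕ)
    (hn : 2 ≤ n) (hu : u.length = n) (hv : v.length = n) (huv : u ≠ v)
    (hperm : SamePerm ω u v) :
    u.dropLast = v.dropLast :=
  stmt10_general ω hap u v hperm
end

section
/- Let ω be an infinite aperiodic binary word with exactly one right special factor of each length n for all n ≥ N, and suppose that for infinitely many n there exists a pair of distinct length-n factors of ω with the same permutation. Then for every n ≥ 2 there exists such a pair of length-n factors. -/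
/- A same-permutation pair of length m restricts, position by position, to a same-permutation
pair of length n ≤ m on any window of the two occurrences; choosing the window to cover a
position where the two factors differ keeps the restricted factors distinct. -/

theorem List.length_take_drop_of_add_le {α : Type*} {w : List α} {a n : ℕ}
    (h : a + n ≤ w.length) : ((w.drop a).take n).length = n :=
  List.length_take_of_le (by rw [List.length_drop]; omega)

theorem OccursAt.drop_take {α : Type*} {ω : ℕ → α} {w : List α} {i : ℕ} (h : OccursAt ω w i)
    (a n : ℕ) : OccursAt ω ((w.drop a).take n) (i + a) := by
  intro k hk
  simp only [List.length_take, List.length_drop, lt_min_iff] at hk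
  rw [List.getElem?_take_of_lt hk.1, List.getElem?_drop, h (a + k) (by omega), Nat.add_assoc]

theorem SamePermAt.window {ω : ℕ → Bool} {m i i' : ℕ} (h : SamePermAt ω m i i') {a n : ℕ}
    (han : a + n ≤ m) : SamePermAt ω n (i + a) (i' + a) := by
  intro k hk l hl
  simpa only [Nat.add_assoc] using h (a + k) (by omega) (a + l) (by omega)

theorem SamePerm.drop_take {ω : ℕ → Bool} {u v : List Bool} (h : SamePerm ω u v) {a n : ℕ}
    (han : a + n ≤ u.length) : SamePerm ω ((u.drop a).take n) ((v.drop a).take n) := by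
  obtain ⟨i, i', hu, hv, hlen, hperm⟩ := h
  refine ⟨i + a, i' + a, hu.drop_take a n, hv.drop_take a n, ?_, ?_⟩
  · rw [List.length_take_drop_of_add_le han, List.length_take_drop_of_add_le (hlen ▸ han)]
  · rw [List.length_take_drop_of_add_le han]
    exact hperm.window han

theorem List.exists_drop_take_ne {α : Type*} {u v : List α} (huv : u ≠ v)
    (hlen : u.length = v.length) {n : ℕ} (hn0 : 0 < n) (hn : n ≤ u.length) :
    ∃ a, a + n ≤ u.length ∧ (u.drop a).take n ≠ (v.drop a).take n := by
  obtain ⟨p, hp⟩ : ∃ p, u[p]? ≠ v[p]? := by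
    by_contra! h
    exact huv (List.ext_getElem? h)
  have hpu : p < u.length := by
    by_contra! h
    exact hp (by rw [List.getElem?_eq_none h, List.getElem?_eq_none (hlen ▸ h)])
  refine ⟨min p (u.length - n), by omega, fun heq => hp ?_⟩
  have hk : p - min p (u.length - n) < n := by omega
  have hget := congrArg (·[p - min p (u.length - n)]?) heq
  simpa only [List.getElem?_take_of_lt hk, List.getElem?_drop,
    Nat.add_sub_cancel' (min_le_left p _)] using hget

theorem stmt16_general (ω : ℕ → Bool)
    (hinf : ∀ m : ℕ, ∃ n ≥ m, ∃ u v : List Bool,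
      u.length = n ∧ v.length = n ∧ u ≠ v ∧ SamePerm ω u v) :
    ∀ n : ℕ, 2 ≤ n → ∃ u v : List Bool,
      u.length = n ∧ v.length = n ∧ u ≠ v ∧ SamePerm ω u v := by
  intro n hn
  obtain ⟨m, hnm, u, v, rfl, hv, huv, hperm⟩ := hinf n
  obtain ⟨a, han, hne⟩ := List.exists_drop_take_ne huv hv.symm (by omega) hnm
  exact ⟨_, _, List.length_take_drop_of_add_le han, List.length_take_drop_of_add_le (hv ▸ han),
    hne, hperm.drop_take han⟩

/-- If ω eventually has a unique right special factor of each
length and same-permutation pairs of distinct equal-length factors exist for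
infinitely many lengths, then they exist for every length n ≥ 2. -/
theorem stmt16 (ω : ℕ → Bool) (hap : AperiodicW ω) (N : ℕ)
    (hrs : ∀ n ≥ N, ∃! r : List Bool, r.length = n ∧ RightSpecial ω r)
    (hinf : ∀ m : ℕ, ∃ n ≥ m, ∃ u v : List Bool,
      u.length = n ∧ v.length = n ∧ u ≠ v ∧ SamePerm ω u v) :
    ∀ n : ℕ, 2 ≤ n → ∃ u v : List Bool,
      u.length = n ∧ v.length = n ∧ u ≠ v ∧ SamePerm ω u v :=
  stmt16_general ω hinf
end
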